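/- arXiv:2604.05717 — 2 statements merged into one kernel-verified Lean document; each statement's English description precedes it below -/
import Mathlib

section
/- Let w : ℝ³ → ℝ³ be continuously differentiable with div w(x) = 0 for all x ∈ ℝ³, and let u : ℝ³ → ℝ³ be continuously differentiable with compact support. Then ∫_{ℝ³} ((curl w)(x) × w(x)) · u(x) dx = ½ ∫_{ℝ³} |w(x)|² (div u)(x) dx − ∫_{ℝ³} w(x) · (Du(x)(w(x))) dx, all integrals being finite. -/
/-!
With `G := ⟪w, u⟫ • w - ½ ⟪w, w⟫ • u`, the product rule and the identity
`⟪(curl w) × a, b⟫ = ⟪Dw a, b⟫ - ⟪a, Dw b⟫` give, pointwise,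
`div G = ((curl w) × w) · u + w · (Du w) - ½ |w|² div u + ⟪w, u⟫ div w`.
The last term vanishes since `w` is divergence-free, and `∫ div G = 0` because `G` is a
compactly supported `C¹` field: each `∫ ∂ᵢ Gᵢ` vanishes by integration by parts against `1`.
-/

open scoped RealInnerProductSpace
open MeasureTheory

noncomputable section

/-- Three-dimensional Euclidean space. -/
abbrev E3 : Type := EuclideanSpace ℝ (Fin 3)

/-- Cross product of vectors in `E3`. -/
def cross (a b : E3) : E3 :=
  WithLp.toLp 2 ![a 1 * b 2 - a 2 * b 1, a 2 * b 0 - a 0 * b 2, a 0 * b 1 - a 1 * b 0]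

/-- Divergence of a vector field: trace of the Jacobian,
`div v (x) = ∑ i, ∂ᵢ vᵢ (x)`. -/
def vdiv (v : E3 → E3) (x : E3) : ℝ :=
  ∑ i, fderiv ℝ v x (EuclideanSpace.single i 1) i

/-- Curl of a vector field (with 0-indexed coordinates):
`curl v = (∂₁v₂ − ∂₂v₁, ∂₂v₀ − ∂₀v₂, ∂₀v₁ − ∂₁v₀)`. -/
def curl (v : E3 → E3) (x : E3) : E3 :=
  WithLp.toLp 2 ![fderiv ℝ v x (EuclideanSpace.single 1 1) 2 - fderiv ℝ v x (EuclideanSpace.single 2 1) 1,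
    fderiv ℝ v x (EuclideanSpace.single 2 1) 0 - fderiv ℝ v x (EuclideanSpace.single 0 1) 2,
    fderiv ℝ v x (EuclideanSpace.single 0 1) 1 - fderiv ℝ v x (EuclideanSpace.single 1 1) 0]

theorem integral_fderiv_apply_eq_zero {E F : Type*} [NormedAddCommGroup E] [NormedSpace ℝ E]
    [FiniteDimensional ℝ E] [MeasurableSpace E] [BorelSpace E] {μ : Measure E}
    [μ.IsAddHaarMeasure] [NormedAddCommGroup F] [NormedSpace ℝ F] {g : E → F} (v : E)
    (hg : Integrable g μ) (hg' : Integrable (fun x ↦ fderiv ℝ g x v) μ)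
    (hd : Differentiable ℝ g) :
    ∫ x, fderiv ℝ g x v ∂μ = 0 := by
  simpa using integral_smul_fderiv_eq_neg_fderiv_smul_of_integrable (μ := μ) (v := v)
    (f := fun _ ↦ (1 : ℝ)) (g := g) (by simp) (by simpa using hg') (by simpa using hg)
    (fun x _ ↦ differentiableAt_const _) (fun x _ ↦ hd x)

theorem EuclideanSpace.map_eq_sum_single {ι F M : Type*} [Fintype ι] [DecidableEq ι]
    [AddCommGroup F] [Module ℝ F] [FunLike M (EuclideanSpace ℝ ι) F]
    [LinearMapClass M ℝ (EuclideanSpace ℝ ι) F] (L : M) (a : EuclideanSpace ℝ ι) :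
    L a = ∑ i, a i • L (EuclideanSpace.single i 1) := by
  conv_lhs => rw [← (EuclideanSpace.basisFun ι ℝ).toBasis.sum_repr a]
  simp [map_sum, map_smul]

theorem ContDiff.continuous_vdiv {V : E3 → E3} (hV : ContDiff ℝ 1 V) : Continuous (vdiv V) := by
  unfold vdiv
  fun_prop

theorem HasCompactSupport.vdiv {V : E3 → E3} (hV : HasCompactSupport V) :
    HasCompactSupport (vdiv V) :=
  (hV.fderiv ℝ).mono <| Function.support_subset_iff'.2 fun x hx ↦ by
    simp [_root_.vdiv, Function.notMem_support.1 hx]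

theorem integral_vdiv_eq_zero {V : E3 → E3} (hV : ContDiff ℝ 1 V) (hVs : HasCompactSupport V) :
    ∫ x, vdiv V x = 0 := by
  have hint (v : E3) : Integrable (fun x ↦ fderiv ℝ V x v) :=
    ((hV.continuous_fderiv one_ne_zero).clm_apply continuous_const).integrable_of_hasCompactSupport
      (hVs.fderiv_apply ℝ v)
  have hzero (v : E3) : ∫ x, fderiv ℝ V x v = 0 :=
    integral_fderiv_apply_eq_zero v (hV.continuous.integrable_of_hasCompactSupport hVs) (hint v)
      (hV.differentiable one_ne_zero)
  have hcoord_int (v : E3) (i : Fin 3) : Integrable (fun x ↦ fderiv ℝ V x v i) :=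
    (EuclideanSpace.proj i : E3 →L[ℝ] ℝ).integrable_comp (hint v)
  have hcoord (v : E3) (i : Fin 3) : ∫ x, fderiv ℝ V x v i = 0 := by
    simpa [hzero v] using ((EuclideanSpace.proj i : E3 →L[ℝ] ℝ).integral_comp_comm (hint v))
  unfold vdiv
  rw [integral_finsetSum _ fun i _ ↦ hcoord_int _ i]
  simp [hcoord]

theorem vdiv_sub {V W : E3 → E3} {x : E3} (hV : DifferentiableAt ℝ V x)
    (hW : DifferentiableAt ℝ W x) :
    vdiv (fun y ↦ V y - W y) x = vdiv V x - vdiv W x := by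
  simp [vdiv, fderiv_fun_sub hV hW, Finset.sum_sub_distrib]

theorem vdiv_smul {f : E3 → ℝ} {V : E3 → E3} {x : E3} (hf : DifferentiableAt ℝ f x)
    (hV : DifferentiableAt ℝ V x) :
    vdiv (fun y ↦ f y • V y) x = f x * vdiv V x + fderiv ℝ f x (V x) := by
  rw [EuclideanSpace.map_eq_sum_single (fderiv ℝ f x)]
  simp [vdiv, fderiv_fun_smul hf hV, Finset.sum_add_distrib, Finset.mul_sum, mul_comm]

theorem inner_cross_curl (w : E3 → E3) (x a b : E3) :
    ⟪cross (curl w x) a, b⟫ = ⟪fderiv ℝ w x a, b⟫ - ⟪a, fderiv ℝ w x b⟫ := by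
  rw [EuclideanSpace.map_eq_sum_single (fderiv ℝ w x) a,
    EuclideanSpace.map_eq_sum_single (fderiv ℝ w x) b]
  simp only [cross, curl, PiLp.inner_apply, RCLike.inner_apply, conj_trivial, Fin.sum_univ_three,
    PiLp.add_apply, PiLp.smul_apply, smul_eq_mul, Matrix.cons_val_zero, Matrix.cons_val_one,
    Matrix.cons_val_two, Matrix.head_cons, Matrix.tail_cons]
  ring

theorem vdiv_inner_smul_sub_half_inner_smul {w u : E3 → E3} {x : E3}
    (hw : DifferentiableAt ℝ w x) (hu : DifferentiableAt ℝ u x) :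
    vdiv (fun y ↦ ⟪w y, u y⟫ • w y - (2⁻¹ * ⟪w y, w y⟫) • u y) x
      = ⟪cross (curl w x) (w x), u x⟫ + ⟪w x, fderiv ℝ u x (w x)⟫
        - 2⁻¹ * ‖w x‖ ^ 2 * vdiv u x + ⟪w x, u x⟫ * vdiv w x := by
  have hwu : DifferentiableAt ℝ (fun y ↦ ⟪w y, u y⟫) x := hw.inner ℝ hu
  have hww : DifferentiableAt ℝ (fun y ↦ ⟪w y, w y⟫) x := hw.inner ℝ hw
  rw [vdiv_sub (hwu.fun_smul hw) ((hww.const_mul _).fun_smul hu), vdiv_smul hwu hw,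
    vdiv_smul (hww.const_mul _) hu, fderiv_const_mul hww, smul_apply,
    fderiv_inner_apply ℝ hw hu, fderiv_inner_apply ℝ hw hw, inner_cross_curl,
    real_inner_self_eq_norm_sq, real_inner_comm (w x) (fderiv ℝ w x (u x))]
  ring

/-- For `w` continuously differentiable and divergence-free and `u`
continuously differentiable with compact support,
`∫ ((curl w) × w) · u = ½ ∫ |w|² div u − ∫ w · (Du)(w)`, all integrals being finite. -/
theorem integral_curl_cross_inner_eq
    (w u : E3 → E3) (hw : ContDiff ℝ 1 w) (hwdiv : ∀ x, vdiv w x = 0)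
    (hu : ContDiff ℝ 1 u) (husupp : HasCompactSupport u) :
    Integrable (fun x => ⟪cross (curl w x) (w x), u x⟫) ∧
    Integrable (fun x => ‖w x‖ ^ 2 * vdiv u x) ∧
    Integrable (fun x => ⟪w x, fderiv ℝ u x (w x)⟫) ∧
    ∫ x, ⟪cross (curl w x) (w x), u x⟫
      = (1 / 2) * (∫ x, ‖w x‖ ^ 2 * vdiv u x) - ∫ x, ⟪w x, fderiv ℝ u x (w x)⟫ := by
  set G : E3 → E3 := fun y ↦ ⟪w y, u y⟫ • w y - (2⁻¹ * ⟪w y, w y⟫) • u y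
  have hG : ContDiff ℝ 1 G :=
    ((hw.inner ℝ hu).smul hw).sub ((contDiff_const.mul (hw.inner ℝ hw)).smul hu)
  have hGs : HasCompactSupport G :=
    husupp.mono <| Function.support_subset_iff'.2 fun x hx ↦ by
      simp [G, Function.notMem_support.1 hx]
  have hpt (x : E3) : ⟪cross (curl w x) (w x), u x⟫
      = vdiv G x + 1 / 2 * (‖w x‖ ^ 2 * vdiv u x) - ⟪w x, fderiv ℝ u x (w x)⟫ := by
    rw [vdiv_inner_smul_sub_half_inner_smul (hw.differentiable one_ne_zero x)
      (hu.differentiable one_ne_zero x), hwdiv]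
    ring
  have hdivG : Integrable (vdiv G) :=
    hG.continuous_vdiv.integrable_of_hasCompactSupport hGs.vdiv
  have hdivu : Integrable (fun x ↦ ‖w x‖ ^ 2 * vdiv u x) :=
    ((hw.continuous.norm.pow 2).mul hu.continuous_vdiv).integrable_of_hasCompactSupport
      husupp.vdiv.mul_left
  have hDu : Integrable (fun x ↦ ⟪w x, fderiv ℝ u x (w x)⟫) :=
    (hw.continuous.inner ((hu.continuous_fderiv one_ne_zero).clm_apply hw.continuous)
      ).integrable_of_hasCompactSupport <| (husupp.fderiv ℝ).mono <|
        Function.support_subset_iff'.2 fun x hx ↦ by simp [Function.notMem_support.1 hx]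
  have hsum : Integrable (fun x ↦ vdiv G x + 1 / 2 * (‖w x‖ ^ 2 * vdiv u x)) :=
    hdivG.add (hdivu.const_mul _)
  simp_rw [hpt]
  refine ⟨hsum.sub hDu, hdivu, hDu, ?_⟩
  rw [integral_sub hsum hDu, integral_add hdivG (hdivu.const_mul _),
    integral_vdiv_eq_zero hG hGs, integral_const_mul, zero_add]

end
end

section
/- Let n ∈ ℕ, let C_inv > 0, let a ∈ ℝ with a ≥ 0, and let b, c : Fin n → ℝ with b i ≥ 0 and c i ≥ 0 for all i. Assume ∑_{i} (b i)² ≤ C_inv · a². Then for every α ≥ 2·C_inv, setting β := min(1/2, α − 2·C_inv), one has a² − 2·∑_{i} (b i)(c i) + α·∑_{i} (c i)² ≥ β·(a² + ∑_{i} (c i)²). -/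
/-- Core algebraic inequality behind the coercivity lemma: if
`∑ i, (b i)² ≤ C_inv a²` with `a, b, c ≥ 0` and `α ≥ 2 C_inv`, then, with
`β := min(1/2, α − 2 C_inv)`, one has
`a² − 2 ∑ i, b i * c i + α ∑ i, (c i)² ≥ β (a² + ∑ i, (c i)²)`. -/
theorem coercivity_core_inequality
    (n : ℕ) (C_inv : ℝ) (hC : 0 < C_inv) (a : ℝ) (ha : 0 ≤ a)
    (b c : Fin n → ℝ) (hb : ∀ i, 0 ≤ b i) (hc : ∀ i, 0 ≤ c i)
    (hsum : ∑ i, (b i) ^ 2 ≤ C_inv * a ^ 2)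
    (α : ℝ) (hα : 2 * C_inv ≤ α)
    (β : ℝ) (hβ : β = min (1 / 2) (α - 2 * C_inv)) :
    β * (a ^ 2 + ∑ i, (c i) ^ 2)
      ≤ a ^ 2 - 2 * ∑ i, b i * c i + α * ∑ i, (c i) ^ 2 := by
  have hcross : ∑ i, b i * c i
      ≤ (1 / (4 * C_inv)) * ∑ i, (b i) ^ 2 + C_inv * ∑ i, (c i) ^ 2 := by
    rw [Finset.mul_sum, Finset.mul_sum, ← Finset.sum_add_distrib]
    refine Finset.sum_le_sum fun i _ => ?_
    have h4C : (0 : ℝ) < 4 * C_inv := by linarith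
    have key : 4 * C_inv * (b i * c i)
        ≤ (b i) ^ 2 + (4 * C_inv) * (C_inv * (c i) ^ 2) := by
      nlinarith [sq_nonneg (b i - 2 * C_inv * c i)]
    rw [div_mul_eq_mul_div, one_mul, ← sub_nonneg]
    have := (le_div_iff₀' h4C).mpr key
    rw [← sub_nonneg] at this
    calc (0:ℝ) ≤ ((b i) ^ 2 + 4 * C_inv * (C_inv * (c i) ^ 2)) / (4 * C_inv)
        - b i * c i := this
      _ = (b i) ^ 2 / (4 * C_inv) + C_inv * (c i) ^ 2 - b i * c i := by
          field_simp
  have hb2 : (1 / (4 * C_inv)) * ∑ i, (b i) ^ 2 ≤ a ^ 2 / 4 := by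
    rw [div_mul_eq_mul_div, one_mul, div_le_div_iff₀ (by linarith) (by norm_num : (0:ℝ) < 4)]
    nlinarith
  have hcsum : (0:ℝ) ≤ ∑ i, (c i) ^ 2 :=
    Finset.sum_nonneg fun i _ => sq_nonneg _
  have hβ1 : β ≤ 1 / 2 := hβ ▸ min_le_left _ _
  have hβ2 : β ≤ α - 2 * C_inv := hβ ▸ min_le_right _ _
  nlinarith [sq_nonneg a]
end
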